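/- Let u : ℝ → ℝ be four times continuously differentiable in a neighborhood of 0 with u(0) ≠ 0 and u''(0) ≠ 0. For h > 0 define the adaptive shape parameter s(h) = u''(h/2)/u(h/2). Then there exist C > 0 and h₀ > 0 such that for every 0 < h < h₀ and every pair λ₁, λ₂ ∈ ℝ satisfying λ₁ + λ₂·√(1 + s(h)·h²) = u(0) and λ₁·√(1 + s(h)·h²) + λ₂ = u(h), the interpolant I(x) = λ₁·√(1 + s(h)·x²) + λ₂·√(1 + s(h)·(x − h)²) satisfies |u(h/2) − I(h/2)| ≤ C·h⁴; i.e., the adaptively chosen shape parameter raises the two-point interpolation error at the midpoint from the polynomial order O(h²) to O(h⁴). -/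

import Mathlib

/-!
Write `v = u(h/2)`, `s = u''(h/2)/v` and `x = s h²`. Adding the two interpolation conditions gives
`λ₁ + λ₂ = (u(0) + u(h)) / (1 + √(1 + x))`, and since both centres are at distance `h/2` from the
midpoint, `I(h/2) = (λ₁ + λ₂) √(1 + x/4)`. The central second difference gives
`u(0) + u(h) = 2v + u''(h/2) h²/4 + O(h⁴)`, and the adaptation condition `s v = u''(h/2)` turns this
into `v (2 + x/4) + O(h⁴)`. So the error is `v (1 + √(1 + x) - (2 + x/4) √(1 + x/4))` up to
`O(h⁴)`, divided by `1 + √(1 + x)`; the bracket is `O(x²) = O(h⁴)` because the first-order terms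
of the two square roots cancel.
-/

open Set Filter Topology Nat Real Asymptotics

theorem ContDiffAt.continuousAt_iteratedDeriv {𝕜 F : Type*} [NontriviallyNormedField 𝕜]
    [NormedAddCommGroup F] [NormedSpace 𝕜 F] {f : 𝕜 → F} {x : 𝕜} {n : WithTop ℕ∞} {m : ℕ}
    (hf : ContDiffAt 𝕜 n f x) (hm : m ≤ n) : ContinuousAt (iteratedDeriv m f) x := by
  simp only [iteratedDeriv_eq_equiv_comp]
  exact (LinearIsometryEquiv.continuous _).continuousAt.comp
    (hf.iteratedFDeriv_right (m := 0) (by simpa using hm)).continuousAt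

lemma taylor_mean_remainder_lagrange_sum {f : ℝ → ℝ} {x x₀ : ℝ} {n : ℕ} (hx : x₀ ≠ x)
    (hf : ContDiffOn ℝ (n + 1) f (uIcc x₀ x)) (hf₀ : ContDiffAt ℝ n f x₀) :
    ∃ x' ∈ uIoo x₀ x, f x - ∑ k ∈ Finset.range (n + 1), iteratedDeriv k f x₀ * (x - x₀) ^ k / k ! =
      iteratedDeriv (n + 1) f x' * (x - x₀) ^ (n + 1) / (n + 1)! := by
  obtain ⟨x', hx', hrem⟩ := taylor_mean_remainder_lagrange_iteratedDeriv hx hf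
  refine ⟨x', hx', ?_⟩
  rw [← hrem, taylor_within_apply]
  congr 1
  refine Finset.sum_congr rfl fun k hk => ?_
  rw [iteratedDerivWithin_eq_iteratedDeriv (uniqueDiffOn_uIcc hx)
    (hf₀.of_le (by exact_mod_cast Finset.mem_range_succ_iff.1 hk)) left_mem_uIcc, smul_eq_mul]
  ring

lemma abs_central_second_difference_sub_le {f : ℝ → ℝ} {c t M : ℝ} (ht : 0 < t)
    (hf : ContDiffOn ℝ 4 f (Icc (c - t) (c + t))) (hfc : ContDiffAt ℝ 3 f c)
    (hM : ∀ x ∈ Icc (c - t) (c + t), |iteratedDeriv 4 f x| ≤ M) :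
    |f (c + t) + f (c - t) - 2 * f c - iteratedDeriv 2 f c * t ^ 2| ≤ M * t ^ 4 / 12 := by
  have hsub : ∀ x ∈ Icc (c - t) (c + t), uIcc c x ⊆ Icc (c - t) (c + t) := fun x hx =>
    uIcc_subset_Icc ⟨by linarith, by linarith⟩ hx
  obtain ⟨ξ₁, hξ₁, e₁⟩ := taylor_mean_remainder_lagrange_sum (n := 3) (x := c + t)
    (by linarith) (hf.mono (hsub _ ⟨by linarith, le_rfl⟩)) hfc
  obtain ⟨ξ₂, hξ₂, e₂⟩ := taylor_mean_remainder_lagrange_sum (n := 3) (x := c - t)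
    (by linarith) (hf.mono (hsub _ ⟨le_rfl, by linarith⟩)) hfc
  simp only [Finset.sum_range_succ, Finset.sum_range_zero] at e₁ e₂
  norm_num [factorial] at e₁ e₂
  have hξ₁M := hM ξ₁ (hsub _ ⟨by linarith, le_rfl⟩ (uIoo_subset_uIcc_self hξ₁))
  have hξ₂M := hM ξ₂ (hsub _ ⟨le_rfl, by linarith⟩ (uIoo_subset_uIcc_self hξ₂))
  have hodd : f (c + t) + f (c - t) - 2 * f c - iteratedDeriv 2 f c * t ^ 2
      = (iteratedDeriv 4 f ξ₁ + iteratedDeriv 4 f ξ₂) * t ^ 4 / 24 := by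
    linear_combination e₁ + e₂
  rw [hodd, abs_div, abs_mul, abs_of_nonneg (by positivity : 0 ≤ t ^ 4), abs_of_pos (by norm_num : (0:ℝ) < 24)]
  calc |iteratedDeriv 4 f ξ₁ + iteratedDeriv 4 f ξ₂| * t ^ 4 / 24
      ≤ (|iteratedDeriv 4 f ξ₁| + |iteratedDeriv 4 f ξ₂|) * t ^ 4 / 24 := by
        gcongr; exact abs_add_le _ _
    _ ≤ (M + M) * t ^ 4 / 24 := by gcongr
    _ = M * t ^ 4 / 12 := by ring

lemma ContDiffAt.isBigO_midpoint_second_difference {u : ℝ → ℝ} {a : ℝ}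
    (hu : ContDiffAt ℝ 4 u a) :
    (fun h => u a + u (a + h) - 2 * u (a + h / 2) - iteratedDeriv 2 u (a + h / 2) * h ^ 2 / 4)
      =O[𝓝[>] 0] fun h => h ^ 4 := by
  obtain ⟨ε, hε, hsmooth⟩ := Metric.eventually_nhds_iff.1 (hu.eventually (by simp))
  have hI : ∀ y ∈ Icc a (a + ε / 2), ContDiffAt ℝ 4 u y := fun y hy =>
    hsmooth (by rw [Real.dist_eq, abs_lt]; constructor <;> linarith [hy.1, hy.2])
  obtain ⟨M, hM⟩ := isCompact_Icc.exists_bound_of_continuousOn (continuousOn_of_forall_continuousAt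
    fun y hy => (hI y hy).continuousAt_iteratedDeriv (m := 4) le_rfl)
  refine IsBigO.of_bound (M / 192) ?_
  filter_upwards [Ioo_mem_nhdsGT (half_pos hε)] with h ⟨h0, hh⟩
  have hsub : Icc (a + h / 2 - h / 2) (a + h / 2 + h / 2) ⊆ Icc a (a + ε / 2) := by
    rw [add_sub_cancel_right, add_assoc, add_halves]
    exact Icc_subset_Icc_right (by linarith)
  have key := abs_central_second_difference_sub_le (half_pos h0)
    (fun y hy => (hI y (hsub hy)).contDiffWithinAt)
    ((hI _ (hsub ⟨by linarith, by linarith⟩)).of_le (by norm_num)) (fun y hy => hM y (hsub hy))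
  rw [add_sub_cancel_right, add_assoc, add_halves] at key
  rw [Real.norm_eq_abs, Real.norm_eq_abs, abs_of_pos (by positivity : 0 < h ^ 4)]
  convert key using 2 <;> ring

lemma abs_sqrt_one_add_sub_le {x : ℝ} (hx : |x| ≤ 1 / 2) :
    |√(1 + x) - (1 + x / 2)| ≤ x ^ 2 := by
  obtain ⟨hx₁, hx₂⟩ := abs_le.1 hx
  have hsq := sq_sqrt (by linarith : (0:ℝ) ≤ 1 + x)
  have hnn := sqrt_nonneg (1 + x)
  rw [abs_le]
  constructor <;> nlinarith [sq_nonneg (√(1 + x) - 1), sq_nonneg x]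

lemma abs_one_add_sqrt_sub_mul_sqrt_le {x : ℝ} (hx : |x| ≤ 1 / 2) :
    |1 + √(1 + x) - (2 + x / 4) * √(1 + x / 4)| ≤ 2 * x ^ 2 := by
  have e₁ := abs_sqrt_one_add_sub_le hx
  have e₂ := abs_sqrt_one_add_sub_le (x := x / 4) (by rw [abs_div]; norm_num; linarith)
  have hcoef : |2 + x / 4| ≤ 9 / 4 := by
    rw [abs_le] at hx ⊢; constructor <;> linarith
  calc |1 + √(1 + x) - (2 + x / 4) * √(1 + x / 4)|
      = |(√(1 + x) - (1 + x / 2)) - (2 + x / 4) * (√(1 + x / 4) - (1 + x / 4 / 2))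
          - x ^ 2 / 32| := by ring_nf
    _ ≤ |√(1 + x) - (1 + x / 2)| + |(2 + x / 4) * (√(1 + x / 4) - (1 + x / 4 / 2))|
          + |x ^ 2 / 32| := (abs_sub _ _).trans (add_le_add_left (abs_sub _ _) _)
    _ ≤ 2 * x ^ 2 := by
        rw [abs_mul, abs_of_nonneg (by positivity : 0 ≤ x ^ 2 / 32)]
        nlinarith [abs_nonneg (2 + x / 4), abs_nonneg (√(1 + x / 4) - (1 + x / 4 / 2))]

lemma abs_sub_mq_interpolant_midpoint_le {s h v w a b l₁ l₂ : ℝ} (hw : s * v = w)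
    (hx : |s * h ^ 2| ≤ 1 / 2)
    (ha : l₁ + l₂ * √(1 + s * h ^ 2) = a) (hb : l₁ * √(1 + s * h ^ 2) + l₂ = b) :
    |v - (l₁ * √(1 + s * (h / 2) ^ 2) + l₂ * √(1 + s * (h / 2 - h) ^ 2))|
      ≤ 2 * |v| * (s * h ^ 2) ^ 2 + 2 * |a + b - 2 * v - w * h ^ 2 / 4| := by
  set x := s * h ^ 2
  set R := √(1 + x)
  set q := √(1 + x / 4)
  set D := a + b - 2 * v - w * h ^ 2 / 4
  have hquarter : s * (h / 2) ^ 2 = x / 4 ∧ s * (h / 2 - h) ^ 2 = x / 4 := by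
    constructor <;> ring
  rw [hquarter.1, hquarter.2]
  have hR : 0 < 1 + R := by positivity
  have hq : 0 ≤ q ∧ q ≤ 2 :=
    ⟨sqrt_nonneg _, sqrt_le_iff.2 ⟨by norm_num, by linarith [abs_le.1 hx]⟩⟩
  have herr : v - (l₁ * q + l₂ * q) = (v * (1 + R - (2 + x / 4) * q) - D * q) / (1 + R) := by
    rw [eq_div_iff hR.ne']
    linear_combination (-q) * (ha + hb) + q * h ^ 2 / 4 * hw
  rw [herr, abs_div, abs_of_pos hR]
  calc |v * (1 + R - (2 + x / 4) * q) - D * q| / (1 + R)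
      ≤ |v * (1 + R - (2 + x / 4) * q) - D * q| :=
        div_le_self (abs_nonneg _) (by linarith [sqrt_nonneg (1 + x)])
    _ ≤ |v| * |1 + R - (2 + x / 4) * q| + |D| * q :=
        (abs_sub _ _).trans_eq (by rw [abs_mul, abs_mul, abs_of_nonneg hq.1])
    _ ≤ |v| * (2 * x ^ 2) + |D| * 2 := by
        gcongr
        · exact abs_one_add_sqrt_sub_mul_sqrt_le hx
        · exact hq.2
    _ = 2 * |v| * x ^ 2 + 2 * |D| := by ring

theorem stmt_2_general (u : ℝ → ℝ) (hu : ContDiffAt ℝ 4 u 0)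
    (hu0 : u 0 ≠ 0) :
    ∃ C > 0, ∃ h₀ > 0, ∀ h : ℝ, 0 < h → h < h₀ →
      ∀ l1 l2 : ℝ,
        l1 + l2 * Real.sqrt (1 + iteratedDeriv 2 u (h / 2) / u (h / 2) * h ^ 2) = u 0 →
        l1 * Real.sqrt (1 + iteratedDeriv 2 u (h / 2) / u (h / 2) * h ^ 2) + l2 = u h →
        |u (h / 2)
            - (l1 * Real.sqrt (1 + iteratedDeriv 2 u (h / 2) / u (h / 2) * (h / 2) ^ 2)
              + l2 * Real.sqrt (1 + iteratedDeriv 2 u (h / 2) / u (h / 2) * (h / 2 - h) ^ 2))|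
          ≤ C * h ^ 4 := by
  obtain ⟨M, hM, hD⟩ := hu.isBigO_midpoint_second_difference.exists_pos
  set s : ℝ → ℝ := fun h => iteratedDeriv 2 u (h / 2) / u (h / 2)
  have hhalf : Tendsto (fun h : ℝ => h / 2) (𝓝 0) (𝓝 0) := by
    simpa using (continuous_id.div_const (2:ℝ)).tendsto 0
  have hv : Tendsto (fun h => u (h / 2)) (𝓝 0) (𝓝 (u 0)) := hu.continuousAt.tendsto.comp hhalf
  have hs : Tendsto s (𝓝 0) (𝓝 (iteratedDeriv 2 u 0 / u 0)) :=
    ((hu.continuousAt_iteratedDeriv (by norm_num)).tendsto.comp hhalf).div hv hu0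
  set K := |u 0| * (iteratedDeriv 2 u 0 / u 0) ^ 2 + 1
  have hK : ∀ᶠ h in 𝓝 0, |u (h / 2)| * s h ^ 2 < K :=
    (hv.abs.mul (hs.pow 2)).eventually_lt_const (lt_add_one _)
  have hx : ∀ᶠ h in 𝓝 0, |s h * h ^ 2| ≤ 1 / 2 := by
    have hx0 : Tendsto (fun h => |s h * h ^ 2|) (𝓝 0) (𝓝 0) := by
      simpa using (hs.mul ((continuous_pow 2).tendsto 0)).abs
    exact hx0.eventually_le_const (by norm_num)
  obtain ⟨h₀, hh₀, hsmall⟩ := mem_nhdsGT_iff_exists_Ioo_subset.1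
    (hD.bound.and (nhdsWithin_le_nhds (hK.and (hx.and (hv.eventually_ne hu0)))))
  refine ⟨2 * K + 2 * M, by positivity, h₀, hh₀, fun h h0 hh l1 l2 ha hb => ?_⟩
  obtain ⟨hDh, hKh, hxh, hvh⟩ := hsmall ⟨h0, hh⟩
  rw [Real.norm_eq_abs, Real.norm_eq_abs, abs_of_pos (by positivity : 0 < h ^ 4)] at hDh
  simp only [zero_add] at hDh
  calc _ ≤ 2 * |u (h / 2)| * (s h * h ^ 2) ^ 2
        + 2 * |u 0 + u h - 2 * u (h / 2) - iteratedDeriv 2 u (h / 2) * h ^ 2 / 4| :=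
        abs_sub_mq_interpolant_midpoint_le (div_mul_cancel₀ _ hvh) hxh ha hb
    _ ≤ 2 * K * h ^ 4 + 2 * (M * h ^ 4) := by
        have hK4 := mul_le_mul_of_nonneg_right hKh.le (pow_nonneg h0.le 4)
        linear_combination 2 * hK4 + 2 * hDh
    _ = (2 * K + 2 * M) * h ^ 4 := by ring

/-- The adaptively chosen shape parameter `s(h) = u''(h/2)/u(h/2)` raises the
two-point MQ interpolation error at the midpoint to fourth order. -/
theorem stmt_2 (u : ℝ → ℝ) (hu : ContDiffAt ℝ 4 u 0)
    (hu0 : u 0 ≠ 0) (hu2 : iteratedDeriv 2 u 0 ≠ 0) :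
    ∃ C > 0, ∃ h₀ > 0, ∀ h : ℝ, 0 < h → h < h₀ →
      ∀ l1 l2 : ℝ,
        l1 + l2 * Real.sqrt (1 + iteratedDeriv 2 u (h / 2) / u (h / 2) * h ^ 2) = u 0 →
        l1 * Real.sqrt (1 + iteratedDeriv 2 u (h / 2) / u (h / 2) * h ^ 2) + l2 = u h →
        |u (h / 2)
            - (l1 * Real.sqrt (1 + iteratedDeriv 2 u (h / 2) / u (h / 2) * (h / 2) ^ 2)
              + l2 * Real.sqrt (1 + iteratedDeriv 2 u (h / 2) / u (h / 2) * (h / 2 - h) ^ 2))|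
          ≤ C * h ^ 4 :=
  stmt_2_general u hu hu0
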